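/- Let l ≥ 1 and let (C_k, ∂_k)_{k≥0} be a chain complex of finite-dimensional 𝔽₂-vector spaces with C_k = 0 for k > l, whose homology satisfies H₀ ≅ 𝔽₂ and H_k = 0 for 1 ≤ k ≤ l. Suppose dim C_k is odd for k = l and even for every k ≠ l with 0 ≤ k ≤ l. Then dim(Ker ∂_k) is odd (in particular Ker ∂_k ≠ 0, hence C_k ≠ 0) for every 0 < k < l. -/

import Mathlib

/-!
In an even-dimensional space a subspace and its quotient, or the kernel and the image of a linear
map, have dimensions of the same parity. Since `dim C₀` is even and `dim C₀ / Im ∂₁ = 1`,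
`Im ∂₁` is odd-dimensional; exactness `Ker ∂_k = Im ∂_{k+1}` and `dim C_k` even then carry oddness
from `Im ∂_k` to `Im ∂_{k+1}`, up to `Im ∂_l`, and `Ker ∂_k = Im ∂_{k+1}` for `0 < k < l`.
-/

section Parity

variable {K V W : Type*} [DivisionRing K] [AddCommGroup V] [Module K V] [FiniteDimensional K V]
  [AddCommGroup W] [Module K W]

theorem odd_finrank_ker_iff_odd_finrank_range_of_even (f : V →ₗ[K] W)
    (hV : Even (Module.finrank K V)) :
    Odd (Module.finrank K (LinearMap.ker f)) ↔ Odd (Module.finrank K (LinearMap.range f)) := by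
  rw [← f.finrank_range_add_finrank_ker, Nat.even_add] at hV
  simp only [← Nat.not_even_iff_odd, hV]

theorem odd_finrank_iff_odd_finrank_quotient_of_even (p : Submodule K V)
    (hV : Even (Module.finrank K V)) :
    Odd (Module.finrank K p) ↔ Odd (Module.finrank K (V ⧸ p)) := by
  rw [← p.finrank_quotient_add_finrank, Nat.even_add] at hV
  simp only [← Nat.not_even_iff_odd, hV]

end Parity

-- `d m` is `∂_{m+1}`, so `ker (d m) = range (d (m + 1))` is the vanishing of `H_{m+1}`.
theorem morse_complex_parity_general (l : ℕ)
    (C : ℕ → Type) [∀ k, AddCommGroup (C k)] [∀ k, Module (ZMod 2) (C k)]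
    [∀ k, FiniteDimensional (ZMod 2) (C k)]
    (d : ∀ m : ℕ, C (m + 1) →ₗ[ZMod 2] C m)
    (hH0 : Module.finrank (ZMod 2) (C 0 ⧸ LinearMap.range (d 0)) = 1)
    (hHk : ∀ m : ℕ, m + 1 ≤ l → LinearMap.ker (d m) = LinearMap.range (d (m + 1)))
    (heven : ∀ k : ℕ, k ≤ l → k ≠ l → Even (Module.finrank (ZMod 2) (C k))) :
    ∀ m : ℕ, m + 1 < l → Odd (Module.finrank (ZMod 2) (LinearMap.ker (d m))) := by
  have odd_range : ∀ m : ℕ, m < l → Odd (Module.finrank (ZMod 2) (LinearMap.range (d m))) := by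
    intro m hm
    induction m with
    | zero =>
      rw [odd_finrank_iff_odd_finrank_quotient_of_even _ (heven 0 (by omega) (by omega)), hH0]
      exact odd_one
    | succ n ih =>
      rw [← hHk n (by omega), odd_finrank_ker_iff_odd_finrank_range_of_even _
        (heven (n + 1) (by omega) (by omega))]
      exact ih (by omega)
  intro m hm
  rw [hHk m (by omega)]
  exact odd_range (m + 1) hm

/-- parity argument in the Morse complex.  Given a chain complex
`(C_k, ∂_k)` of finite-dimensional `𝔽₂`-vector spaces with `C_k = 0` for `k > l`,
`H₀ ≅ 𝔽₂`, `H_k = 0` for `1 ≤ k ≤ l`, `dim C_l` odd and `dim C_k` even for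
`k ≠ l`, `0 ≤ k ≤ l`, then `Ker ∂_k` is odd-dimensional (hence nonzero) for all
`0 < k < l`.  Here `d m : C (m+1) → C m` denotes `∂_{m+1}`, so `∂_k = d (k-1)`. -/
theorem morse_complex_parity (l : ℕ) (hl : 1 ≤ l)
    (C : ℕ → Type) [∀ k, AddCommGroup (C k)] [∀ k, Module (ZMod 2) (C k)]
    [∀ k, FiniteDimensional (ZMod 2) (C k)]
    (d : ∀ m : ℕ, C (m + 1) →ₗ[ZMod 2] C m)
    (hcomplex : ∀ m : ℕ, (d m).comp (d (m + 1)) = 0)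
    (htop : ∀ k : ℕ, l < k → Module.finrank (ZMod 2) (C k) = 0)
    (hH0 : Module.finrank (ZMod 2) (C 0 ⧸ LinearMap.range (d 0)) = 1)
    (hHk : ∀ m : ℕ, m + 1 ≤ l → LinearMap.ker (d m) = LinearMap.range (d (m + 1)))
    (hodd : Odd (Module.finrank (ZMod 2) (C l)))
    (heven : ∀ k : ℕ, k ≤ l → k ≠ l → Even (Module.finrank (ZMod 2) (C k))) :
    ∀ m : ℕ, m + 1 < l → Odd (Module.finrank (ZMod 2) (LinearMap.ker (d m))) :=
  morse_complex_parity_general l C d hH0 hHk heven
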